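/- For every integer s ≥ 2, with p = ⌊√s⌋ and q = ⌊s/4⌋, the inequality 4(s − q) > (p+1)² holds; consequently the configuration R_{s,p,q} is an edge-perimeter minimizer among subsets of Z^2 with s² − s⌊√s⌋ − ⌊s/4⌋ elements. -/

import Mathlib

open Finset Filter

/-- Adjacency in `ℤ²`: Euclidean distance one. -/
def adj2 (x y : ℤ × ℤ) : Prop :=
  (x.1 - y.1) ^ 2 + (x.2 - y.2) ^ 2 = 1

/-- Cardinality of the edge boundary `Θ₂(E)` in `ℤ²` (ordered pairs). -/
noncomputable def theta2 (E : Finset (ℤ × ℤ)) : ℕ :=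
  Set.ncard {p : (ℤ × ℤ) × (ℤ × ℤ) | adj2 p.1 p.2 ∧ p.1 ∈ E ∧ p.2 ∉ E}

/-- Number of ordered bonded pairs of `E ⊂ ℤ²`; this equals `2 b(E)`. -/
noncomputable def bondPairs2 (E : Finset (ℤ × ℤ)) : ℕ :=
  Set.ncard {p : (ℤ × ℤ) × (ℤ × ℤ) | adj2 p.1 p.2 ∧ p.1 ∈ E ∧ p.2 ∈ E}

/-- Number of unit bonds `b(E) = ½·#{(x,y) ∈ E×E : |x−y|=1}`. -/
noncomputable def bonds2 (E : Finset (ℤ × ℤ)) : ℕ := bondPairs2 E / 2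

/-- The configuration `R_{s,p,q} ⊂ ℤ²`: the lattice points of the rectangle
`[1, s−p−1] × [1, s]` together with the column `{s−p} × [1, s−q]`. -/
noncomputable def Rspq (s p q : ℕ) : Finset (ℤ × ℤ) :=
  (Icc (1 : ℤ) ((s : ℤ) - p - 1) ×ˢ Icc (1 : ℤ) (s : ℤ)) ∪
    ({(s : ℤ) - p} ×ˢ Icc (1 : ℤ) ((s : ℤ) - q))

/-!
Every nonempty row of a finite `F ⊆ ℤ²` has a boundary edge at each end, and so has every
column, hence `θ(F) ≥ 2(r + c)` where `F` meets `r` rows and `c` columns. As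
`4 #F ≤ 4 r c ≤ (r + c)²`, this forces `θ(F) ≥ 2(2s - p)` once `(2s - p - 1)² < 4 #F`, which for
`#F = s² - sp - q` is the criterion `(p + 1)² < 4(s - q)`. The boundary of `R_{s,p,q}` consists
only of the two ends of its `s` rows and `s - p` columns, so `θ(R_{s,p,q}) ≤ 2(2s - p)`.
For `p = ⌊√s⌋` and `q = ⌊s/4⌋` the criterion reads `(⌊√s⌋ + 1)² ≤ s + 2√s + 1 < 3s ≤ 4(s - q)`.
-/

lemma exists_add_nsmul_mem_and_add_succ_nsmul_notMem {G : Type*} [AddLeftCancelMonoid G]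
    (F : Finset G) {d : G} (hd : ¬IsOfFinAddOrder d) {x : G} (hx : x ∈ F) :
    ∃ k : ℕ, x + k • d ∈ F ∧ x + (k + 1) • d ∉ F := by
  have hleave : ∃ k : ℕ, x + k • d ∉ F := by
    by_contra! hall
    have hinj : Function.Injective fun k : ℕ => x + k • d := fun a b hab =>
      injective_nsmul_iff_not_isOfFinAddOrder.mpr hd (add_left_cancel hab)
    exact Set.infinite_range_of_injective hinj |>.mono (Set.range_subset_iff.mpr hall)
      |>.not_finite F.finite_toSet
  classical
  have hfirst : Nat.find hleave ≠ 0 := fun h => Nat.find_spec hleave (by simpa [h] using hx)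
  refine ⟨Nat.find hleave - 1, ?_, ?_⟩
  · exact not_not.mp (Nat.find_min hleave (by omega))
  · simpa [Nat.sub_add_cancel (Nat.pos_of_ne_zero hfirst)] using Nat.find_spec hleave

lemma card_image_le_card_filter_add_notMem {G H : Type*} [AddLeftCancelMonoid G]
    [DecidableEq G] [DecidableEq H] (F : Finset G) {d : G} (hd : ¬IsOfFinAddOrder d)
    (π : G → H) (hπ : ∀ x, π (x + d) = π x) :
    #(F.image π) ≤ #{x ∈ F | x + d ∉ F} := by
  refine card_le_card_of_surjOn π fun y hy => ?_
  obtain ⟨x, hx, rfl⟩ := mem_image.mp hy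
  obtain ⟨k, hin, hout⟩ := exists_add_nsmul_mem_and_add_succ_nsmul_notMem F hd hx
  have hline : ∀ n : ℕ, π (x + n • d) = π x := by
    intro n
    induction n with
    | zero => simp
    | succ n ih => rw [succ_nsmul, ← add_assoc, hπ, ih]
  exact ⟨x + k • d, by simpa [succ_nsmul, add_assoc] using And.intro hin hout, hline k⟩

def unitVectors : Finset (ℤ × ℤ) := {(1, 0), (-1, 0), (0, 1), (0, -1)}

lemma sq_add_sq_eq_one_iff (a b : ℤ) : a ^ 2 + b ^ 2 = 1 ↔ (a, b) ∈ unitVectors := by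
  simp only [unitVectors, mem_insert, mem_singleton, Prod.mk.injEq]
  constructor
  · intro h
    have ha₁ : -1 ≤ a := by nlinarith [sq_nonneg b, sq_nonneg (a + 1)]
    have ha₂ : a ≤ 1 := by nlinarith [sq_nonneg b, sq_nonneg (a - 1)]
    have hb₁ : -1 ≤ b := by nlinarith [sq_nonneg a, sq_nonneg (b + 1)]
    have hb₂ : b ≤ 1 := by nlinarith [sq_nonneg a, sq_nonneg (b - 1)]
    interval_cases a <;> interval_cases b <;> simp_all
  · rintro (⟨rfl, rfl⟩ | ⟨rfl, rfl⟩ | ⟨rfl, rfl⟩ | ⟨rfl, rfl⟩) <;> norm_num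

lemma adj2_iff_sub_mem_unitVectors (x y : ℤ × ℤ) : adj2 x y ↔ y - x ∈ unitVectors := by
  rw [adj2, ← neg_sub y.1, ← neg_sub y.2, neg_sq, neg_sq, sq_add_sq_eq_one_iff]
  rfl

lemma theta2_eq_sum (E : Finset (ℤ × ℤ)) :
    theta2 E = ∑ d ∈ unitVectors, #{x ∈ E | x + d ∉ E} := by
  have hset : {p : (ℤ × ℤ) × (ℤ × ℤ) | adj2 p.1 p.2 ∧ p.1 ∈ E ∧ p.2 ∉ E} =
      ↑(((unitVectors ×ˢ E).filter fun dx => dx.2 + dx.1 ∉ E).image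
        fun dx => (dx.2, dx.2 + dx.1)) := by
    ext ⟨x, y⟩
    simp only [Set.mem_ofPred_eq, coe_image, coe_filter, mem_product, Set.mem_image,
      Prod.mk.injEq, adj2_iff_sub_mem_unitVectors]
    constructor
    · rintro ⟨hd, hx, hy⟩
      exact ⟨(y - x, x), ⟨⟨hd, hx⟩, by simpa using hy⟩, rfl, add_sub_cancel x y⟩
    · rintro ⟨⟨d, x⟩, ⟨⟨hd, hx⟩, hy⟩, rfl, rfl⟩
      exact ⟨by simpa using hd, hx, hy⟩
  rw [theta2, hset, Set.ncard_coe_finset, card_image_of_injective, card_filter, sum_product]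
  · simp only [card_filter]
  · rintro ⟨d, x⟩ ⟨d', x'⟩ h
    simp only [Prod.mk.injEq] at h ⊢
    obtain ⟨rfl, h⟩ := h
    exact ⟨add_left_cancel h, rfl⟩

lemma two_mul_card_image_fst_add_snd_le_theta2 (F : Finset (ℤ × ℤ)) :
    2 * (#(F.image Prod.fst) + #(F.image Prod.snd)) ≤ theta2 F := by
  have hinf : ∀ d ∈ unitVectors, ¬IsOfFinAddOrder d := fun d hd => by
    rw [isOfFinAddOrder_iff_eq_zero]
    rintro rfl
    exact absurd hd (by decide)
  have right := card_image_le_card_filter_add_notMem F (hinf (1, 0) (by decide)) Prod.snd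
    fun _ => by simp
  have left := card_image_le_card_filter_add_notMem F (hinf (-1, 0) (by decide)) Prod.snd
    fun _ => by simp
  have up := card_image_le_card_filter_add_notMem F (hinf (0, 1) (by decide)) Prod.fst
    fun _ => by simp
  have down := card_image_le_card_filter_add_notMem F (hinf (0, -1) (by decide)) Prod.fst
    fun _ => by simp
  rw [theta2_eq_sum, unitVectors, sum_insert (by decide), sum_insert (by decide),
    sum_insert (by decide), sum_singleton]
  omega

lemma two_mul_add_one_le_theta2_of_sq_lt (F : Finset (ℤ × ℤ)) (m : ℕ)
    (h : m ^ 2 < 4 * #F) : 2 * (m + 1) ≤ theta2 F := by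
  set c := #(F.image Prod.fst)
  set r := #(F.image Prod.snd)
  have hF : #F ≤ c * r := (card_le_card subset_product).trans_eq (card_product _ _)
  have hm : m < c + r := by
    by_contra! hle
    nlinarith [sq_nonneg ((c : ℤ) - r), Nat.pow_le_pow_left hle 2]
  have := two_mul_card_image_fst_add_snd_le_theta2 F
  omega

def IsEdgePerimeterMinimizer (E : Finset (ℤ × ℤ)) : Prop :=
  ∀ F : Finset (ℤ × ℤ), #F = #E → theta2 E ≤ theta2 F

section Rspq

variable {s p q : ℕ}

lemma mem_Rspq {x y : ℤ} :
    (x, y) ∈ Rspq s p q ↔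
      (1 ≤ x ∧ x ≤ s - p - 1 ∧ 1 ≤ y ∧ y ≤ s) ∨ (x = s - p ∧ 1 ≤ y ∧ y ≤ s - q) := by
  simp only [Rspq, mem_union, mem_product, mem_Icc, mem_singleton]
  tauto

lemma card_Rspq (hp : p < s) (hq : q ≤ s) : #(Rspq s p q) = s ^ 2 - s * p - q := by
  rw [Rspq, card_union_of_disjoint, card_product, card_product, card_singleton, Int.card_Icc,
    Int.card_Icc, Int.card_Icc]
  · have hwidth : ((s : ℤ) - p - 1 + 1 - 1).toNat = s - (p + 1) := by omega
    have hheight : ((s : ℤ) + 1 - 1).toNat = s := by omega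
    have hcolumn : ((s : ℤ) - q + 1 - 1).toNat = s - q := by omega
    have hsp : s * p + q ≤ s ^ 2 := by nlinarith
    rw [hwidth, hheight, hcolumn, one_mul]
    zify [Nat.succ_le_of_lt hp, hq, le_self_add.trans hsp, Nat.le_sub_of_add_le' hsp]
    ring
  · rw [disjoint_left]
    rintro ⟨x, y⟩ hx hy
    simp only [mem_product, mem_Icc, mem_singleton] at hx hy
    omega

lemma theta2_Rspq_le (hp : p < s) (hq : q ≤ s) : theta2 (Rspq s p q) ≤ 4 * s - 2 * p := by
  -- The right ends of the rows are the column `s - p` and the top `q` cells of column `s - p - 1`.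
  have right : #{x ∈ Rspq s p q | x + (1, 0) ∉ Rspq s p q} ≤ s := by
    calc _ ≤ #(({(s : ℤ) - p - 1} ×ˢ Icc ((s : ℤ) - q + 1) s) ∪
            ({(s : ℤ) - p} ×ˢ Icc 1 ((s : ℤ) - q))) := by
          refine card_le_card fun ⟨x, y⟩ => ?_
          simp only [mem_filter, Prod.mk_add_mk, mem_Rspq, mem_union, mem_product,
            mem_singleton, mem_Icc]
          omega
      _ ≤ s := by
          grw [card_union_le]
          simp only [card_product, card_singleton, Int.card_Icc]
          omega
  have left : #{x ∈ Rspq s p q | x + (-1, 0) ∉ Rspq s p q} ≤ s := by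
    calc _ ≤ #({(1 : ℤ)} ×ˢ Icc (1 : ℤ) s) := by
          refine card_le_card fun ⟨x, y⟩ => ?_
          simp only [mem_filter, Prod.mk_add_mk, mem_Rspq, mem_product, mem_singleton, mem_Icc]
          omega
      _ = s := by simp
  have up : #{x ∈ Rspq s p q | x + (0, 1) ∉ Rspq s p q} ≤ s - p := by
    calc _ ≤ #((Icc 1 ((s : ℤ) - p - 1) ×ˢ {(s : ℤ)}) ∪ {((s : ℤ) - p, (s : ℤ) - q)}) := by
          refine card_le_card fun ⟨x, y⟩ => ?_
          simp only [mem_filter, Prod.mk_add_mk, mem_Rspq, mem_union, mem_product,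
            mem_singleton, mem_Icc, Prod.mk.injEq]
          omega
      _ ≤ s - p := by
          grw [card_union_le]
          simp only [card_product, card_singleton, Int.card_Icc]
          omega
  have down : #{x ∈ Rspq s p q | x + (0, -1) ∉ Rspq s p q} ≤ s - p := by
    calc _ ≤ #(Icc 1 ((s : ℤ) - p) ×ˢ {(1 : ℤ)}) := by
          refine card_le_card fun ⟨x, y⟩ => ?_
          simp only [mem_filter, Prod.mk_add_mk, mem_Rspq, mem_product, mem_singleton, mem_Icc]
          omega
      _ = s - p := by
          simp only [card_product, card_singleton, Int.card_Icc]
          omega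
  rw [theta2_eq_sum, unitVectors, sum_insert (by decide), sum_insert (by decide),
    sum_insert (by decide), sum_singleton]
  omega

theorem isEdgePerimeterMinimizer_Rspq (hp : p < s) (hq : q ≤ s)
    (hcrit : ((p : ℤ) + 1) ^ 2 < 4 * ((s : ℤ) - q)) :
    IsEdgePerimeterMinimizer (Rspq s p q) := by
  intro F hF
  have hsp : s * p + q ≤ s ^ 2 := by nlinarith
  have hsq : (2 * s - (p + 1)) ^ 2 < 4 * #F := by
    rw [hF, card_Rspq hp hq]
    zify [Nat.le_sub_of_add_le' hsp, le_self_add.trans hsp, (by omega : p + 1 ≤ 2 * s)]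
    nlinarith
  calc theta2 (Rspq s p q) ≤ 4 * s - 2 * p := theta2_Rspq_le hp hq
    _ = 2 * (2 * s - (p + 1) + 1) := by omega
    _ ≤ theta2 F := two_mul_add_one_le_theta2_of_sq_lt F _ hsq

end Rspq

/-- for `s ≥ 2`, with `p = ⌊√s⌋` and `q = ⌊s/4⌋`, one has
`4(s−q) > (p+1)²`, and consequently `R_{s,p,q}` minimizes the edge perimeter
among subsets of `ℤ²` with `s² − s⌊√s⌋ − ⌊s/4⌋` elements. -/
theorem Rspq_sqrt_minimizer (s : ℕ) (hs : 2 ≤ s) :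
    4 * ((s : ℤ) - (s / 4 : ℕ)) > ((Nat.sqrt s : ℤ) + 1) ^ 2 ∧
    (Rspq s (Nat.sqrt s) (s / 4)).card = s ^ 2 - s * Nat.sqrt s - s / 4 ∧
    ∀ F : Finset (ℤ × ℤ), F.card = s ^ 2 - s * Nat.sqrt s - s / 4 →
      theta2 (Rspq s (Nat.sqrt s) (s / 4)) ≤ theta2 F := by
  have hp : Nat.sqrt s < s := Nat.sqrt_lt_self (by omega)
  have hq : s / 4 ≤ s := Nat.div_le_self s 4
  have hcrit : 4 * ((s : ℤ) - (s / 4 : ℕ)) > ((Nat.sqrt s : ℤ) + 1) ^ 2 := by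
    have hsqrt : (Nat.sqrt s : ℤ) ^ 2 ≤ s := by exact_mod_cast Nat.sqrt_le' s
    have hquarter : 4 * ((s / 4 : ℕ) : ℤ) ≤ s := by omega
    nlinarith
  have hcard := card_Rspq hp hq
  exact ⟨hcrit, hcard, fun F hF =>
    isEdgePerimeterMinimizer_Rspq hp hq hcrit F (hF.trans hcard.symm)⟩
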